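/- For every real number h ≠ 0, the intersection of all geodesics of the flat cylinder C that contain both of the points π(0, 0) and π(0, h) equals the set {π(0, n·h) : n ∈ ℤ}. -/
import Mathlib


/-- The flat cylinder `C = (ℝ/ℤ) × ℝ`. -/
abbrev Cyl : Type := AddCircle (1 : ℝ) × ℝ

/-- The quotient map `π : ℝ × ℝ → C`, `π(x, y) = (↑x, y)`. -/
noncomputable def cylπ (p : ℝ × ℝ) : Cyl := ((p.1 : AddCircle (1 : ℝ)), p.2)

/-- An affine line in `ℝ²`. -/
def IsLine (L : Set (ℝ × ℝ)) : Prop :=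
  ∃ p v : ℝ × ℝ, v ≠ 0 ∧ L = {x | ∃ t : ℝ, x = p + t • v}

/-- A geodesic of the flat cylinder is the image under `π` of an affine line. -/
def IsCylGeodesic (G : Set Cyl) : Prop :=
  ∃ L : Set (ℝ × ℝ), IsLine L ∧ G = cylπ '' L

lemma cylπ_eq_iff (a b : ℝ × ℝ) :
    cylπ a = cylπ b ↔ (∃ m : ℤ, (m : ℝ) = a.1 - b.1) ∧ a.2 = b.2 := by
  simp only [cylπ, Prod.ext_iff]
  constructor
  · rintro ⟨h1, h2⟩
    refine ⟨?_, h2⟩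
    have h0 : ((a.1 - b.1 : ℝ) : AddCircle (1 : ℝ)) = 0 := by
      rw [AddCircle.coe_sub, h1, sub_self]
    obtain ⟨m, hm⟩ := (AddCircle.coe_eq_zero_iff (1 : ℝ)).mp h0
    exact ⟨m, by simpa using hm⟩
  · rintro ⟨⟨m, hm⟩, h2⟩
    refine ⟨?_, h2⟩
    have h0 : ((a.1 - b.1 : ℝ) : AddCircle (1 : ℝ)) = 0 :=
      (AddCircle.coe_eq_zero_iff (1 : ℝ)).mpr ⟨m, by simpa using hm⟩
    rw [AddCircle.coe_sub] at h0
    exact sub_eq_zero.mp h0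

/-- The guaranteed set of the points `π(0,0)` and `π(0,h)` (the intersection of all geodesics
through both) is the set of points `π(0, n·h)` for `n ∈ ℤ`. -/
theorem cylinder_guaranteed_set_vertical (h : ℝ) (hh : h ≠ 0) :
    ⋂₀ {G : Set Cyl | IsCylGeodesic G ∧ cylπ (0, 0) ∈ G ∧ cylπ (0, h) ∈ G} =
      {p : Cyl | ∃ n : ℤ, p = cylπ (0, (n : ℝ) * h)} := by
  ext q
  simp only [Set.mem_sInter, Set.mem_setOf_eq]
  constructor
  · intro H
    have h1 := H (cylπ '' {x | ∃ t : ℝ, x = (0,0) + t • ((0:ℝ),(1:ℝ))})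
      ⟨⟨_, ⟨(0,0), ((0:ℝ),(1:ℝ)), by simp [Prod.ext_iff], rfl⟩, rfl⟩,
        ⟨(0,0), ⟨0, by simp⟩, rfl⟩,
        ⟨((0:ℝ),h), ⟨h, by simp [Prod.ext_iff]⟩, rfl⟩⟩
    have h2 := H (cylπ '' {x | ∃ t : ℝ, x = (0,0) + t • ((1:ℝ), h)})
      ⟨⟨_, ⟨(0,0), ((1:ℝ),h), by simp [Prod.ext_iff], rfl⟩, rfl⟩,
        ⟨(0,0), ⟨0, by simp⟩, rfl⟩,
        ⟨((1:ℝ),h), ⟨1, by simp [Prod.ext_iff]⟩,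
          by rw [cylπ_eq_iff]; exact ⟨⟨1, by norm_num⟩, rfl⟩⟩⟩
    obtain ⟨x1, ⟨t, rfl⟩, hq1⟩ := h1
    obtain ⟨x2, ⟨s, rfl⟩, hq2⟩ := h2
    have hq := hq2.trans hq1.symm
    rw [cylπ_eq_iff] at hq
    obtain ⟨⟨m, hm⟩, h2'⟩ := hq
    simp only [Prod.smul_mk, Prod.mk_add_mk, smul_eq_mul, mul_zero, mul_one, add_zero,
      zero_add] at hm h2' hq1
    -- hm : (m : ℝ) = s - 0, h2' : s * h = t
    refine ⟨m, ?_⟩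
    rw [← hq1, cylπ_eq_iff]
    refine ⟨⟨0, by simp⟩, ?_⟩
    simp only
    have hs : s = (m : ℝ) := by linarith
    rw [← h2', hs]
  · rintro ⟨n, rfl⟩ G ⟨⟨L, ⟨p, v, hv, rfl⟩, rfl⟩, ⟨a, ⟨ta, rfl⟩, haq⟩, ⟨b, ⟨tb, rfl⟩, hbq⟩⟩
    rw [cylπ_eq_iff] at haq hbq
    obtain ⟨⟨m, hm⟩, ha2⟩ := haq
    obtain ⟨⟨k, hk⟩, hb2⟩ := hbq
    refine ⟨p + (ta + n * (tb - ta)) • v, ⟨_, rfl⟩, ?_⟩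
    rw [cylπ_eq_iff]
    simp only [Prod.fst_add, Prod.snd_add, Prod.smul_fst, Prod.smul_snd, smul_eq_mul] at *
    constructor
    · refine ⟨m + n * (k - m), ?_⟩
      push_cast
      linear_combination (1 - (n : ℝ)) * hm + (n : ℝ) * hk
    · linear_combination (1 - (n : ℝ)) * ha2 + (n : ℝ) * hb2
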